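/- Let n, t ≥ 1. Let A₁, A₂ be a pair of orthogonal Latin squares of order n, let B₁, B₂ be a pair of orthogonal Latin squares of order n, let C₀, …, C_{t−1} be t mutually orthogonal Latin squares of order n, all indexed by [n] = {0, 1, …, n−1}, and let f : [t] → [t] be a bijection. Define, on the index set [n] × [n], the arrays ℬ₁((p,r),(q,c)) = (A₁(p,q), B₁(r,c)), ℬ₂((p,r),(q,c)) = (A₂(p,q), B₂(r,c)), and 𝒳_{i,f(i)}((p,r),(q,c)) = (C_i(p, B₁(r,c)), C_{f(i)}(q, B₂(r,c))) for i ∈ [t]. Then ℬ₁, ℬ₂ together with the 𝒳_{i,f(i)}, i ∈ [t], form a set of t+2 mutually orthogonal Latin squares of order n². -/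

import Mathlib

/-!
On finite sets bijectivity is injectivity, so every claim is a recovery of the cell from its symbols.
For the products `A ⊗ B` this happens coordinatewise. For
`𝒳_{C,D}((p,r),(q,c)) = (C(p, B₁(r,c)), D(q, B₂(r,c)))` against `𝒳_{C',D'}`, orthogonality of
`C, C'` and of `D, D'` recovers `p, B₁(r,c)` and `q, B₂(r,c)`, then orthogonality of `B₁, B₂`
recovers `(r,c)`. Against `A₁ ⊗ B₁`, the symbol gives `B₁(r,c)`, hence `p` from a column of `C`,
hence `q` from a row of `A₁`, hence `B₂(r,c)` from a row of `D`, hence `(r,c)`.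
-/

/-- A Latin square on an index/symbol set `α`: every row and every column is a bijection. -/
def IsLatinSquare {α : Type*} (L : α → α → α) : Prop :=
  (∀ r, Function.Bijective (fun c => L r c)) ∧
  (∀ c, Function.Bijective (fun r => L r c))

/-- Two Latin squares (as arrays) are orthogonal if superimposing them gives a bijection. -/
def IsOrthogonal {α : Type*} (L₁ L₂ : α → α → α) : Prop :=
  Function.Bijective (fun rc : α × α => (L₁ rc.1 rc.2, L₂ rc.1 rc.2))

open Function

variable {α β : Type*}

theorem IsLatinSquare.of_injective [Finite α] {L : α → α → α}
    (hrow : ∀ r, Injective fun c => L r c) (hcol : ∀ c, Injective fun r => L r c) :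
    IsLatinSquare L :=
  ⟨fun r => Finite.injective_iff_bijective.mp (hrow r),
    fun c => Finite.injective_iff_bijective.mp (hcol c)⟩

theorem IsOrthogonal.of_injective [Finite α] {L₁ L₂ : α → α → α}
    (h : ∀ r c r' c', L₁ r c = L₁ r' c' → L₂ r c = L₂ r' c' → r = r' ∧ c = c') :
    IsOrthogonal L₁ L₂ :=
  Finite.injective_iff_bijective.mp fun ⟨r, c⟩ ⟨r', c'⟩ e => by
    obtain ⟨hr, hc⟩ := h r c r' c' (Prod.ext_iff.mp e).1 (Prod.ext_iff.mp e).2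
    rw [hr, hc]

theorem IsOrthogonal.eq_of_eq {L₁ L₂ : α → α → α} (h : IsOrthogonal L₁ L₂) {r c r' c' : α}
    (h₁ : L₁ r c = L₁ r' c') (h₂ : L₂ r c = L₂ r' c') : r = r' ∧ c = c' :=
  Prod.ext_iff.mp (h.injective (a₁ := (r, c)) (a₂ := (r', c')) (Prod.ext h₁ h₂))

def squareProd (A : α → α → α) (B : β → β → β) : α × β → α × β → α × β :=
  fun pr qc => (A pr.1 qc.1, B pr.2 qc.2)

def coupledSquare (C D B₁ B₂ : α → α → α) : α × α → α × α → α × α :=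
  fun pr qc => (C pr.1 (B₁ pr.2 qc.2), D qc.1 (B₂ pr.2 qc.2))

section Finite

variable [Finite α] [Finite β]

theorem IsLatinSquare.prod {A : α → α → α} {B : β → β → β}
    (hA : IsLatinSquare A) (hB : IsLatinSquare B) : IsLatinSquare (squareProd A B) :=
  .of_injective
    (fun _ _ _ e => Prod.ext ((hA.1 _).injective (Prod.ext_iff.mp e).1)
      ((hB.1 _).injective (Prod.ext_iff.mp e).2))
    (fun _ _ _ e => Prod.ext ((hA.2 _).injective (Prod.ext_iff.mp e).1)
      ((hB.2 _).injective (Prod.ext_iff.mp e).2))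

theorem IsOrthogonal.prod {A₁ A₂ : α → α → α} {B₁ B₂ : β → β → β}
    (hA : IsOrthogonal A₁ A₂) (hB : IsOrthogonal B₁ B₂) :
    IsOrthogonal (squareProd A₁ B₁) (squareProd A₂ B₂) :=
  .of_injective fun _ _ _ _ e₁ e₂ => by
    obtain ⟨hp, hq⟩ := hA.eq_of_eq (Prod.ext_iff.mp e₁).1 (Prod.ext_iff.mp e₂).1
    obtain ⟨hr, hc⟩ := hB.eq_of_eq (Prod.ext_iff.mp e₁).2 (Prod.ext_iff.mp e₂).2
    exact ⟨Prod.ext hp hr, Prod.ext hq hc⟩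

end Finite

section Coupled

variable [Finite α] {C D C' D' A₁ A₂ B₁ B₂ : α → α → α}

theorem IsLatinSquare.coupledSquare (hC : IsLatinSquare C) (hD : IsLatinSquare D)
    (hB₁ : IsLatinSquare B₁) (hB₂ : IsLatinSquare B₂) :
    IsLatinSquare (_root_.coupledSquare C D B₁ B₂) := by
  refine .of_injective (fun ⟨p, r⟩ ⟨q, c⟩ ⟨q', c'⟩ e => ?_) (fun ⟨q, c⟩ ⟨p, r⟩ ⟨p', r'⟩ e => ?_)
  all_goals simp only [_root_.coupledSquare, Prod.mk.injEq] at e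
  · have hc : c = c' := (hB₁.1 r).injective ((hC.1 p).injective e.1)
    subst hc
    rw [(hD.2 _).injective e.2]
  · have hr : r = r' := (hB₂.2 c).injective ((hD.1 q).injective e.2)
    subst hr
    rw [(hC.2 _).injective e.1]

theorem IsOrthogonal.coupledSquare (hC : IsOrthogonal C C') (hD : IsOrthogonal D D')
    (hB : IsOrthogonal B₁ B₂) :
    IsOrthogonal (_root_.coupledSquare C D B₁ B₂) (_root_.coupledSquare C' D' B₁ B₂) :=
  .of_injective fun ⟨p, r⟩ ⟨q, c⟩ ⟨p', r'⟩ ⟨q', c'⟩ e₁ e₂ => by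
    simp only [_root_.coupledSquare, Prod.mk.injEq] at e₁ e₂
    obtain ⟨hp, hB₁⟩ := hC.eq_of_eq e₁.1 e₂.1
    obtain ⟨hq, hB₂⟩ := hD.eq_of_eq e₁.2 e₂.2
    obtain ⟨hr, hc⟩ := hB.eq_of_eq hB₁ hB₂
    subst hp hq hr hc
    exact ⟨rfl, rfl⟩

theorem IsOrthogonal.squareProd_left_coupledSquare (hA₁ : IsLatinSquare A₁)
    (hC : IsLatinSquare C) (hD : IsLatinSquare D) (hB : IsOrthogonal B₁ B₂) :
    IsOrthogonal (squareProd A₁ B₁) (_root_.coupledSquare C D B₁ B₂) :=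
  .of_injective fun ⟨p, r⟩ ⟨q, c⟩ ⟨p', r'⟩ ⟨q', c'⟩ e₁ e₂ => by
    simp only [squareProd, _root_.coupledSquare, Prod.mk.injEq] at e₁ e₂
    have hp : p = p' := (hC.2 _).injective (e₁.2 ▸ e₂.1)
    subst hp
    have hq : q = q' := (hA₁.1 p).injective e₁.1
    subst hq
    obtain ⟨hr, hc⟩ := hB.eq_of_eq e₁.2 ((hD.1 q).injective e₂.2)
    subst hr hc
    exact ⟨rfl, rfl⟩

theorem IsOrthogonal.squareProd_right_coupledSquare (hA₂ : IsLatinSquare A₂)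
    (hC : IsLatinSquare C) (hD : IsLatinSquare D) (hB : IsOrthogonal B₁ B₂) :
    IsOrthogonal (squareProd A₂ B₂) (_root_.coupledSquare C D B₁ B₂) :=
  .of_injective fun ⟨p, r⟩ ⟨q, c⟩ ⟨p', r'⟩ ⟨q', c'⟩ e₁ e₂ => by
    simp only [squareProd, _root_.coupledSquare, Prod.mk.injEq] at e₁ e₂
    have hq : q = q' := (hD.2 _).injective (e₁.2 ▸ e₂.2)
    subst hq
    have hp : p = p' := (hA₂.2 q).injective e₁.1
    subst hp
    obtain ⟨hr, hc⟩ := hB.eq_of_eq ((hC.1 p).injective e₂.1) e₁.2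
    subst hr hc
    exact ⟨rfl, rfl⟩

end Coupled

theorem stmt_8_general (n t : ℕ)
    (A₁ A₂ B₁ B₂ : Fin n → Fin n → Fin n)
    (hA₁ : IsLatinSquare A₁) (hA₂ : IsLatinSquare A₂) (hA : IsOrthogonal A₁ A₂)
    (hB₁ : IsLatinSquare B₁) (hB₂ : IsLatinSquare B₂) (hB : IsOrthogonal B₁ B₂)
    (C : Fin t → Fin n → Fin n → Fin n)
    (hC : ∀ i, IsLatinSquare (C i))
    (hCorth : ∀ i j, i ≠ j → IsOrthogonal (C i) (C j))
    (f : Fin t → Fin t) (hf : Function.Bijective f)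
    (calB₁ calB₂ : (Fin n × Fin n) → (Fin n × Fin n) → (Fin n × Fin n))
    (hcalB₁ : ∀ pr qc, calB₁ pr qc = (A₁ pr.1 qc.1, B₁ pr.2 qc.2))
    (hcalB₂ : ∀ pr qc, calB₂ pr qc = (A₂ pr.1 qc.1, B₂ pr.2 qc.2))
    (X : Fin t → (Fin n × Fin n) → (Fin n × Fin n) → (Fin n × Fin n))
    (hX : ∀ i pr qc, X i pr qc =
      (C i pr.1 (B₁ pr.2 qc.2), C (f i) qc.1 (B₂ pr.2 qc.2))) :
    IsLatinSquare calB₁ ∧ IsLatinSquare calB₂ ∧ (∀ i, IsLatinSquare (X i)) ∧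
    IsOrthogonal calB₁ calB₂ ∧
    (∀ i j, i ≠ j → IsOrthogonal (X i) (X j)) ∧
    (∀ i, IsOrthogonal calB₁ (X i)) ∧
    (∀ i, IsOrthogonal calB₂ (X i)) := by
  obtain rfl : calB₁ = squareProd A₁ B₁ := funext₂ hcalB₁
  obtain rfl : calB₂ = squareProd A₂ B₂ := funext₂ hcalB₂
  obtain rfl : X = fun i => coupledSquare (C i) (C (f i)) B₁ B₂ := funext fun i => funext₂ (hX i)
  exact ⟨hA₁.prod hB₁, hA₂.prod hB₂, fun i => (hC i).coupledSquare (hC (f i)) hB₁ hB₂,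
    hA.prod hB,
    fun i j hij => (hCorth i j hij).coupledSquare (hCorth _ _ (hf.injective.ne hij)) hB,
    fun i => .squareProd_left_coupledSquare hA₁ (hC i) (hC (f i)) hB,
    fun i => .squareProd_right_coupledSquare hA₂ (hC i) (hC (f i)) hB⟩

/-- Theorem 9 of the paper: `ℬ₁`, `ℬ₂` together with the `𝒳_{i,f(i)}`, `i ∈ [t]`,
form a set of `t+2` MOLS of order `n²`. -/
theorem stmt_8 (n t : ℕ) (hn : 1 ≤ n) (ht : 1 ≤ t)
    (A₁ A₂ B₁ B₂ : Fin n → Fin n → Fin n)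
    (hA₁ : IsLatinSquare A₁) (hA₂ : IsLatinSquare A₂) (hA : IsOrthogonal A₁ A₂)
    (hB₁ : IsLatinSquare B₁) (hB₂ : IsLatinSquare B₂) (hB : IsOrthogonal B₁ B₂)
    (C : Fin t → Fin n → Fin n → Fin n)
    (hC : ∀ i, IsLatinSquare (C i))
    (hCorth : ∀ i j, i ≠ j → IsOrthogonal (C i) (C j))
    (f : Fin t → Fin t) (hf : Function.Bijective f)
    (calB₁ calB₂ : (Fin n × Fin n) → (Fin n × Fin n) → (Fin n × Fin n))
    (hcalB₁ : ∀ pr qc, calB₁ pr qc = (A₁ pr.1 qc.1, B₁ pr.2 qc.2))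
    (hcalB₂ : ∀ pr qc, calB₂ pr qc = (A₂ pr.1 qc.1, B₂ pr.2 qc.2))
    (X : Fin t → (Fin n × Fin n) → (Fin n × Fin n) → (Fin n × Fin n))
    (hX : ∀ i pr qc, X i pr qc =
      (C i pr.1 (B₁ pr.2 qc.2), C (f i) qc.1 (B₂ pr.2 qc.2))) :
    IsLatinSquare calB₁ ∧ IsLatinSquare calB₂ ∧ (∀ i, IsLatinSquare (X i)) ∧
    IsOrthogonal calB₁ calB₂ ∧
    (∀ i j, i ≠ j → IsOrthogonal (X i) (X j)) ∧
    (∀ i, IsOrthogonal calB₁ (X i)) ∧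
    (∀ i, IsOrthogonal calB₂ (X i)) :=
  stmt_8_general n t A₁ A₂ B₁ B₂ hA₁ hA₂ hA hB₁ hB₂ hB C hC hCorth f hf calB₁ calB₂ hcalB₁ hcalB₂ X
    hX
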